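/- arXiv:2302.06509 — 5 statements merged into one kernel-verified Lean document; each statement's English description precedes it below -/
import Mathlib

section
/- Let a > 0, A > 0, B ∈ ℝ, and s₀ ∈ (−1, 0). Let g : ℝ → ℝ be differentiable on [s₀, 0) and satisfy, for every s ∈ [s₀, 0), the differential inequality g'(s) + A θ_a(s)^{−2} g(s) ≤ B θ_a(s)^{−2}. Then for every s ∈ [s₀, 0), g(s) ≤ g(s₀) · ((−s)/(−s₀))^{A/a} + (B/A) · (1 − ((−s)/(−s₀))^{A/a}). -/
open MeasureTheory Set
open scoped ENNReal RealInnerProductSpace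

noncomputable section

abbrev E3 := EuclideanSpace ℝ (Fin 3)

/-- `θ_a(t) = √(a·(−t))`. -/
def theta (a t : ℝ) : ℝ := Real.sqrt (a * (-t))

/-- standard basis vector of `ℝ³`. -/
def e3 (i : Fin 3) : E3 := EuclideanSpace.single i 1

/-- sum of squares of all first-order partial derivatives of `u` at `x`. -/
def gradSq (u : E3 → E3) (x : E3) : ℝ := ∑ i, ‖fderiv ℝ u x (e3 i)‖ ^ 2

/-- componentwise Laplacian of a vector field on `ℝ³`. -/
def laplacian3 (u : E3 → E3) (x : E3) : E3 :=
  ∑ i, fderiv ℝ (fun y => fderiv ℝ u y (e3 i)) x (e3 i)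

/-- Laplacian of a scalar function on `ℝ³`. -/
def lap3 (f : E3 → ℝ) (x : E3) : ℝ :=
  ∑ i, fderiv ℝ (fun y => fderiv ℝ f y (e3 i)) x (e3 i)

/-- divergence of a vector field on `ℝ³`. -/
def div3 (u : E3 → E3) (x : E3) : ℝ := ∑ i, fderiv ℝ u x (e3 i) i

/-- `(v, p)` is a smooth solution of the Navier–Stokes equations on `ℝ³ × (−1,0)`. -/
structure IsNSSolution (v : ℝ × E3 → E3) (p : ℝ × E3 → ℝ) : Prop where
  smooth_v : ContDiffOn ℝ (⊤ : ℕ∞) v (Set.Ioo (-1:ℝ) 0 ×ˢ Set.univ)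
  smooth_p : ContDiffOn ℝ (⊤ : ℕ∞) p (Set.Ioo (-1:ℝ) 0 ×ˢ Set.univ)
  momentum : ∀ t ∈ Set.Ioo (-1:ℝ) 0, ∀ x : E3,
    deriv (fun τ => v (τ, x)) t - laplacian3 (fun y => v (t, y)) x
      + fderiv ℝ (fun y => v (t, y)) x (v (t, x))
      + gradient (fun y => p (t, y)) x = 0
  div_free : ∀ t ∈ Set.Ioo (-1:ℝ) 0, ∀ x : E3, div3 (fun y => v (t, y)) x = 0

/-- finite energy. -/
def FiniteEnergy (v : ℝ × E3 → E3) : Prop :=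
  ∃ E : ℝ,
    (∀ t ∈ Set.Ioo (-1:ℝ) 0,
      ∫⁻ x : E3, ENNReal.ofReal (‖v (t, x)‖ ^ 2) ≤ ENNReal.ofReal E) ∧
    ∫⁻ t in Set.Ioo (-1:ℝ) 0,
      ∫⁻ x : E3, ENNReal.ofReal (gradSq (fun y => v (t, y)) x) ≤ ENNReal.ofReal E

/-- the pressure integrability condition `S_a < ∞`. -/
def PressureCond (a : ℝ) (v : ℝ × E3 → E3) (p : ℝ × E3 → ℝ) : Prop :=
  ∫⁻ t in Set.Ioo (-1:ℝ) 0,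
    (∫⁻ x in Metric.ball (0:E3) (3/4 * Real.sqrt a) \ Metric.ball (0:E3) (1/2 * Real.sqrt a),
      ENNReal.ofReal (‖v (t, x)‖ ^ 3 + |p (t, x)| ^ (3/2 : ℝ))) ^ (2/3 : ℝ) < ⊤

/-- `(0,0)` is a singular point: `v` is essentially unbounded on every `B(0,r) × (−r²,0)`. -/
def SingularPoint (v : ℝ × E3 → E3) : Prop :=
  ∀ r ∈ Set.Ioo (0:ℝ) 1,
    ¬ ∃ C : ℝ, ∀ᵐ q ∂((volume : Measure (ℝ × E3)).restrict
        (Set.Ioo (-r^2) (0:ℝ) ×ˢ Metric.ball (0:E3) r)), ‖v q‖ ≤ C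

/-- weak `L^p` quasinorm: `sup_{α>0} α · μ({|f| > α})^{1/p}`. -/
def wnorm' {X : Type*} [MeasurableSpace X] {F : Type*} [NormedAddCommGroup F]
    (f : X → F) (p : ℝ) (μ : Measure X) : ℝ≥0∞ :=
  ⨆ (α : ℝ) (_ : 0 < α), ENNReal.ofReal α * (μ {x | α < ‖f x‖}) ^ (1 / p)

/-- Gronwall estimate for the differential inequality
`g' + A θ_a^{−2} g ≤ B θ_a^{−2}` on `[s₀, 0)`. -/
theorem stmt6 (a A B s₀ : ℝ) (ha : 0 < a) (hA : 0 < A) (hs₀ : s₀ ∈ Set.Ioo (-1:ℝ) 0)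
    (g g' : ℝ → ℝ)
    (hderiv : ∀ s ∈ Set.Ico s₀ (0:ℝ), HasDerivAt g (g' s) s)
    (hineq : ∀ s ∈ Set.Ico s₀ (0:ℝ),
      g' s + A * theta a s ^ (-2 : ℝ) * g s ≤ B * theta a s ^ (-2 : ℝ)) :
    ∀ s ∈ Set.Ico s₀ (0:ℝ),
      g s ≤ g s₀ * ((-s) / (-s₀)) ^ (A / a) + (B / A) * (1 - ((-s) / (-s₀)) ^ (A / a)) := by

  intro s hs
  have hs0neg : s₀ < 0 := hs₀.2
  have hsneg : s < 0 := hs.2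
  have hns0 : (0:ℝ) < -s₀ := by linarith
  have hns : (0:ℝ) < -s := by linarith
  set c := A / a with hc
  have hc0 : 0 < c := div_pos hA ha
  set w : ℝ → ℝ := fun t => ((-s₀) * (-t)⁻¹) ^ c with hw
  set f : ℝ → ℝ := fun t => (g t - B / A) * w t with hf
  have hwpos : ∀ t : ℝ, t < 0 → 0 < w t := by
    intro t ht
    have : (0:ℝ) < -t := by linarith
    have : (0:ℝ) < (-s₀) * (-t)⁻¹ := by positivity
    exact Real.rpow_pos_of_pos this c
  have hfderiv : ∀ t ∈ Set.Ico s₀ (0:ℝ),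
      HasDerivAt f ((g' t + c * (g t - B / A) / (-t)) * w t) t := by
    intro t ht
    have htneg : t < 0 := ht.2
    have hnt : (0:ℝ) < -t := by linarith
    have hnt' : -t ≠ 0 := ne_of_gt hnt
    have h1 : HasDerivAt (fun x : ℝ => -x) (-1) t := (hasDerivAt_id t).neg
    have h2 : HasDerivAt (fun x : ℝ => (-x)⁻¹) (-(-1) / (-t) ^ 2) t := h1.inv hnt'
    have h3 : HasDerivAt (fun x : ℝ => (-s₀) * (-x)⁻¹)
        ((-s₀) * (-(-1) / (-t) ^ 2)) t := h2.const_mul _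
    have hbase : (-s₀) * (-t)⁻¹ ≠ 0 := by positivity
    have h4 : HasDerivAt (fun x : ℝ => ((-s₀) * (-x)⁻¹) ^ c)
        (((-s₀) * (-(-1) / (-t) ^ 2)) * c * ((-s₀) * (-t)⁻¹) ^ (c - 1)) t :=
      h3.rpow_const (Or.inl hbase)
    have h5 : HasDerivAt (fun x : ℝ => g x - B / A) (g' t) t :=
      (hderiv t ht).sub_const _
    have h6 := h5.mul h4
    have hexp : ((-s₀) * (-t)⁻¹) ^ (c - 1)
        = ((-s₀) * (-t)⁻¹) ^ c / ((-s₀) * (-t)⁻¹) := by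
      rw [show c - 1 = c - (1:ℝ) from rfl,
        Real.rpow_sub (by positivity : (0:ℝ) < (-s₀) * (-t)⁻¹), Real.rpow_one]
    have heq : g' t * ((-s₀) * (-t)⁻¹) ^ c
        + (g t - B / A) * (((-s₀) * (-(-1) / (-t) ^ 2)) * c * ((-s₀) * (-t)⁻¹) ^ (c - 1))
        = (g' t + c * (g t - B / A) / (-t)) * ((-s₀) * (-t)⁻¹) ^ c := by
      rw [hexp]
      generalize ((-s₀) * (-t)⁻¹ : ℝ) ^ c = W
      have hs0' : s₀ ≠ 0 := by linarith
      have ht0 : t ≠ 0 := by linarith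
      have hA' : A ≠ 0 := ne_of_gt hA
      have ha' : a ≠ 0 := ne_of_gt ha
      field_simp
    rw [hf]
    simp only [hw]
    rw [← heq]
    exact h6
  have hthet : ∀ t : ℝ, t < 0 → theta a t ^ (-2 : ℝ) = (a * (-t))⁻¹ := by
    intro t ht
    have h0 : (0:ℝ) ≤ a * (-t) := by nlinarith
    rw [theta, show (-2 : ℝ) = -(2:ℝ) by norm_num,
      Real.rpow_neg (Real.sqrt_nonneg _), Real.rpow_two, Real.sq_sqrt h0]
  have hkey : ∀ t ∈ Set.Ico s₀ (0:ℝ), g' t + c * (g t - B / A) / (-t) ≤ 0 := by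
    intro t ht
    have htneg : t < 0 := ht.2
    have hineq' := hineq t ht
    rw [hthet t htneg] at hineq'
    have hrw : c * (g t - B / A) / (-t)
        = A * (a * (-t))⁻¹ * g t - B * (a * (-t))⁻¹ := by
      rw [hc]
      have ht0 : t ≠ 0 := by linarith
      have hA' : A ≠ 0 := ne_of_gt hA
      have ha' : a ≠ 0 := ne_of_gt ha
      field_simp
      ring
    rw [hrw]; linarith
  have cont : ContinuousOn f (Set.Ico s₀ 0) := fun x hx =>
    ((hfderiv x hx).continuousAt).continuousWithinAt
  have hanti : AntitoneOn f (Set.Ico s₀ 0) := by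
    apply antitoneOn_of_deriv_nonpos (convex_Ico _ _) cont
    · intro x hx
      rw [interior_Ico] at hx
      exact (hfderiv x (Set.Ioo_subset_Ico_self hx)).differentiableAt.differentiableWithinAt
    · intro x hx
      rw [interior_Ico] at hx
      rw [(hfderiv x (Set.Ioo_subset_Ico_self hx)).deriv]
      exact mul_nonpos_of_nonpos_of_nonneg (hkey x (Set.Ioo_subset_Ico_self hx))
        (le_of_lt (hwpos x hx.2))
  have hs₀mem : s₀ ∈ Set.Ico s₀ (0:ℝ) := ⟨le_refl _, hs0neg⟩
  have hfs : f s ≤ f s₀ := hanti hs₀mem hs hs.1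
  have hws₀ : w s₀ = 1 := by
    rw [hw]
    simp [mul_inv_cancel₀ (ne_of_gt hns0), mul_inv_cancel₀ (ne_of_lt hs0neg)]
  have hfs₀ : f s₀ = g s₀ - B / A := by
    show (g s₀ - B / A) * w s₀ = _
    rw [hws₀, mul_one]
  set v : ℝ := ((-s) / (-s₀)) ^ (A / a) with hv
  have hvpos : 0 < v := Real.rpow_pos_of_pos (by positivity) _
  have hwv : w s * v = 1 := by
    rw [hw, hv, ← hc, ← Real.mul_rpow (by positivity) (by positivity)]
    rw [show (-s₀) * (-s)⁻¹ * ((-s) / (-s₀)) = 1 by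
      have h0 : s * s₀ ≠ 0 := ne_of_gt (mul_pos_of_neg_of_neg hsneg hs0neg)
      field_simp
      exact div_self (mul_ne_zero hs0neg.ne hsneg.ne)]
    exact Real.one_rpow c
  have h1 : (g s - B / A) * w s ≤ g s₀ - B / A := by
    rw [← hfs₀]; exact hfs
  have h2 : (g s - B / A) * w s * v ≤ (g s₀ - B / A) * v :=
    mul_le_mul_of_nonneg_right h1 (le_of_lt hvpos)
  have h3 : g s - B / A = (g s - B / A) * w s * v := by
    rw [mul_assoc, hwv, mul_one]
  have hA' : A ≠ 0 := ne_of_gt hA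
  nlinarith [h2, h3]


end
end

section
/- Let a > 0, A > 0, B ∈ ℝ, and s₀ ∈ (−1, 0). Let g : ℝ → ℝ be differentiable on [s₀, 0) and satisfy, for every s ∈ [s₀, 0), the differential inequality g'(s) + A θ_a(s)^{−2} g(s) ≤ B θ_a(s)^{−2}. Then g is bounded above on [s₀, 0): for every s ∈ [s₀, 0), g(s) ≤ max(g(s₀), B/A). Moreover, for every s ∈ [s₀, 0), g(s) ≤ B/A + |g(s₀) − B/A| · ((−s)/(−s₀))^{A/a}, where ((−s)/(−s₀))^{A/a} → 0 as s → 0⁻, so that limsup_{s→0⁻} g(s) ≤ B/A. -/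
open MeasureTheory Set
open scoped ENNReal RealInnerProductSpace

noncomputable section

/-- boundedness and asymptotic damping from the Gronwall inequality. -/
theorem stmt7 (a A B s₀ : ℝ) (ha : 0 < a) (hA : 0 < A) (hs₀ : s₀ ∈ Set.Ioo (-1:ℝ) 0)
    (g g' : ℝ → ℝ)
    (hderiv : ∀ s ∈ Set.Ico s₀ (0:ℝ), HasDerivAt g (g' s) s)
    (hineq : ∀ s ∈ Set.Ico s₀ (0:ℝ),
      g' s + A * theta a s ^ (-2 : ℝ) * g s ≤ B * theta a s ^ (-2 : ℝ)) :
    (∀ s ∈ Set.Ico s₀ (0:ℝ), g s ≤ max (g s₀) (B / A)) ∧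
    (∀ s ∈ Set.Ico s₀ (0:ℝ),
      g s ≤ B / A + |g s₀ - B / A| * ((-s) / (-s₀)) ^ (A / a)) ∧
    Filter.Tendsto (fun s : ℝ => ((-s) / (-s₀)) ^ (A / a))
      (nhdsWithin 0 (Set.Iio 0)) (nhds 0) := by
  obtain ⟨hs₀1, hs₀0⟩ := hs₀
  set c : ℝ := A / a with hc
  have hcpos : 0 < c := div_pos hA ha
  have hA' : A ≠ 0 := hA.ne'
  have ha' : a ≠ 0 := ha.ne'
  -- theta simplification
  have htheta : ∀ s : ℝ, s < 0 → theta a s ^ (-2 : ℝ) = (a * (-s))⁻¹ := by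
    intro s hs
    have h1 : 0 < a * (-s) := mul_pos ha (by linarith)
    rw [show theta a s = Real.sqrt (a * (-s)) from rfl,
      Real.rpow_neg (Real.sqrt_nonneg _),
      show ((2:ℝ)) = ((2:ℕ):ℝ) from by norm_num,
      Real.rpow_natCast, Real.sq_sqrt h1.le]
  set φ : ℝ → ℝ := fun s => (g s - B / A) * (-s) ^ (-c : ℝ) with hφ
  have hφderiv : ∀ s ∈ Set.Ico s₀ (0:ℝ),
      HasDerivAt φ ((g' s + c / (-s) * (g s - B / A)) * (-s) ^ (-c : ℝ)) s := by
    intro s hs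
    have hspos : (0:ℝ) < -s := by linarith [hs.2]
    have hsne : (-s : ℝ) ≠ 0 := hspos.ne'
    have h1 : HasDerivAt (fun t : ℝ => (-t) ^ (-c : ℝ))
        ((-c * (-s) ^ (-c - 1 : ℝ)) * (-1)) s :=
      (Real.hasDerivAt_rpow_const (Or.inl hsne)).comp s (hasDerivAt_neg s)
    have h2 := ((hderiv s hs).sub_const (B / A)).mul h1
    refine h2.congr_deriv ?_
    have h3 : (-s : ℝ) ^ (-c - 1 : ℝ) = (-s) ^ (-c : ℝ) / (-s) := by
      rw [show (-c - 1 : ℝ) = -c - 1 from rfl, Real.rpow_sub hspos, Real.rpow_one]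
    rw [h3]
    field_simp
  have hderiv_nonpos : ∀ s ∈ Set.Ico s₀ (0:ℝ),
      (g' s + c / (-s) * (g s - B / A)) * (-s) ^ (-c : ℝ) ≤ 0 := by
    intro s hs
    have hspos : (0:ℝ) < -s := by linarith [hs.2]
    have h := hineq s hs
    rw [htheta s hs.2] at h
    have hsne : s ≠ 0 := by linarith
    have key : c / (-s) * (g s - B / A) = A * (a * (-s))⁻¹ * g s - B * (a * (-s))⁻¹ := by
      field_simp [hc, hsne]
      rw [hc]; field_simp; ring
    have h0 : g' s + c / (-s) * (g s - B / A) ≤ 0 := by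
      rw [key]; linarith
    exact mul_nonpos_of_nonpos_of_nonneg h0 (Real.rpow_nonneg hspos.le _)
  have hanti : AntitoneOn φ (Set.Ico s₀ 0) := by
    apply antitoneOn_of_deriv_nonpos (convex_Ico s₀ 0)
    · exact fun s hs => (hφderiv s hs).continuousAt.continuousWithinAt
    · intro s hs
      rw [interior_Ico] at hs
      exact (hφderiv s ⟨hs.1.le, hs.2⟩).differentiableAt.differentiableWithinAt
    · intro s hs
      rw [interior_Ico] at hs
      rw [(hφderiv s ⟨hs.1.le, hs.2⟩).deriv]
      exact hderiv_nonpos s ⟨hs.1.le, hs.2⟩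
  -- main pointwise bound
  have hmain : ∀ s ∈ Set.Ico s₀ (0:ℝ),
      g s ≤ B / A + (g s₀ - B / A) * ((-s) / (-s₀)) ^ c := by
    intro s hs
    have hspos : (0:ℝ) < -s := by linarith [hs.2]
    have hs₀pos : (0:ℝ) < -s₀ := by linarith
    have hφle : φ s ≤ φ s₀ :=
      hanti (Set.left_mem_Ico.2 (by linarith)) hs hs.1
    have hP : (0:ℝ) < (-s) ^ (c : ℝ) := Real.rpow_pos_of_pos hspos _
    have hQ : (0:ℝ) < (-s₀) ^ (c : ℝ) := Real.rpow_pos_of_pos hs₀pos _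
    have hr : ((-s) / (-s₀)) ^ (c : ℝ) = (-s) ^ (c : ℝ) / (-s₀) ^ (c : ℝ) :=
      Real.div_rpow hspos.le hs₀pos.le _
    have e1 : (-s : ℝ) ^ (-c : ℝ) = ((-s) ^ (c : ℝ))⁻¹ := by
      rw [Real.rpow_neg hspos.le]
    have e2 : (-s₀ : ℝ) ^ (-c : ℝ) = ((-s₀) ^ (c : ℝ))⁻¹ := by
      rw [Real.rpow_neg hs₀pos.le]
    rw [hφ] at hφle
    simp only [e1, e2] at hφle
    rw [hr]
    have h4 := mul_le_mul_of_nonneg_right hφle hP.le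
    rw [inv_mul_cancel_right₀ hP.ne'] at h4
    calc g s = B / A + (g s - B / A) := by ring
      _ ≤ B / A + (g s₀ - B / A) * ((-s₀) ^ (c : ℝ))⁻¹ * (-s) ^ (c : ℝ) := by linarith
      _ = B / A + (g s₀ - B / A) * ((-s) ^ (c : ℝ) / (-s₀) ^ (c : ℝ)) := by ring
  have hr01 : ∀ s ∈ Set.Ico s₀ (0:ℝ),
      0 ≤ ((-s) / (-s₀)) ^ (c : ℝ) ∧ ((-s) / (-s₀)) ^ (c : ℝ) ≤ 1 := by
    intro s hs
    have hspos : (0:ℝ) < -s := by linarith [hs.2]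
    have hs₀pos : (0:ℝ) < -s₀ := by linarith
    constructor
    · positivity
    · apply Real.rpow_le_one (by positivity)
      · rw [div_le_one hs₀pos]; linarith [hs.1]
      · exact hcpos.le
  refine ⟨?_, ?_, ?_⟩
  · intro s hs
    have h := hmain s hs
    obtain ⟨hr0, hr1⟩ := hr01 s hs
    rcases le_total (g s₀) (B / A) with hle | hle
    · have : (g s₀ - B / A) * ((-s) / (-s₀)) ^ (c : ℝ) ≤ 0 :=
        mul_nonpos_of_nonpos_of_nonneg (by linarith) hr0
      exact le_trans (by linarith) (le_max_right _ _)
    · have : (g s₀ - B / A) * ((-s) / (-s₀)) ^ (c : ℝ) ≤ g s₀ - B / A := by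
        nlinarith
      exact le_trans (by linarith) (le_max_left _ _)
  · intro s hs
    have h := hmain s hs
    obtain ⟨hr0, hr1⟩ := hr01 s hs
    have : (g s₀ - B / A) * ((-s) / (-s₀)) ^ (c : ℝ)
        ≤ |g s₀ - B / A| * ((-s) / (-s₀)) ^ (c : ℝ) :=
      mul_le_mul_of_nonneg_right (le_abs_self _) hr0
    linarith
  · have hs₀pos : (0:ℝ) < -s₀ := by linarith
    have hbase : Filter.Tendsto (fun s : ℝ => (-s) / (-s₀))
        (nhdsWithin 0 (Set.Iio 0)) (nhds 0) := by
      have : Filter.Tendsto (fun s : ℝ => (-s) / (-s₀)) (nhds 0) (nhds 0) := by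
        have := ((continuous_neg.div_const (-s₀)).tendsto (0:ℝ))
        simpa using this
      exact this.mono_left nhdsWithin_le_nhds
    have hcont : ContinuousAt (fun x : ℝ => x ^ (c : ℝ)) 0 :=
      Real.continuousAt_rpow_const 0 c (Or.inr hcpos.le)
    have := hcont.tendsto.comp hbase
    rw [Real.zero_rpow hcpos.ne'] at this
    exact this

end
end

section
/- Let (X, μ) be a measure space, let p, q ∈ (0, ∞), and define r by 1/r = 1/p + 1/q. Let f, g : X → ℝ be a.e.-measurable. Then wnorm(f·g, r, μ) ≤ 2^{1/r} · wnorm(f, p, μ) · wnorm(g, q, μ), the inequality being read in the extended nonnegative reals. -/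
open MeasureTheory Set
open scoped ENNReal RealInnerProductSpace

noncomputable section

/-- If the weak norm is zero, the function is essentially supported nowhere. -/
lemma wnorm'_zero_imp {X : Type*} [MeasurableSpace X] {μ : Measure X} {f : X → ℝ} {p : ℝ}
    (hp : 0 < p) (h : wnorm' f p μ = 0) : μ {x | 0 < ‖f x‖} = 0 := by
  have hall : ∀ β : ℝ, 0 < β → μ {x | β < ‖f x‖} = 0 := by
    intro β hβ
    have h0 : ENNReal.ofReal β * (μ {x | β < ‖f x‖}) ^ (1 / p) = 0 := by
      have hle : ENNReal.ofReal β * (μ {x | β < ‖f x‖}) ^ (1 / p) ≤ wnorm' f p μ :=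
        le_iSup₂_of_le β hβ le_rfl
      simpa [h] using hle
    rcases mul_eq_zero.mp h0 with h1 | h1
    · exact absurd h1 (by simp [hβ])
    · rcases (ENNReal.rpow_eq_zero_iff).mp h1 with ⟨h2, _⟩ | ⟨_, h2⟩
      · exact h2
      · exact absurd h2 (not_lt.mpr (by positivity))
  have hsub : {x | 0 < ‖f x‖} ⊆ ⋃ n : ℕ, {x | (1 : ℝ) / (n + 1) < ‖f x‖} := by
    intro x hx
    obtain ⟨n, hn⟩ := exists_nat_one_div_lt (show (0:ℝ) < ‖f x‖ from hx)
    exact Set.mem_iUnion.mpr ⟨n, hn⟩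
  refine measure_mono_null hsub (measure_iUnion_null fun n => hall _ (by positivity))

/-- weak Chebyshev-type bound from the weak norm. -/
lemma wnorm'_bound {X : Type*} [MeasurableSpace X] {μ : Measure X} {f : X → ℝ} {p : ℝ}
    (hp : 0 < p) {β : ℝ} (hβ : 0 < β) :
    μ {x | β < ‖f x‖} ≤ (wnorm' f p μ / ENNReal.ofReal β) ^ p := by
  have hle : ENNReal.ofReal β * (μ {x | β < ‖f x‖}) ^ (1 / p) ≤ wnorm' f p μ :=
    le_iSup₂_of_le β hβ le_rfl
  have hdiv : (μ {x | β < ‖f x‖}) ^ (1 / p) ≤ wnorm' f p μ / ENNReal.ofReal β := by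
    rw [ENNReal.le_div_iff_mul_le (Or.inl (by simp [hβ])) (Or.inl ENNReal.ofReal_ne_top)]
    rw [mul_comm]; exact hle
  have := ENNReal.rpow_le_rpow hdiv hp.le
  rwa [← ENNReal.rpow_mul, one_div, inv_mul_cancel₀ hp.ne', ENNReal.rpow_one] at this

/-- the key real computation with the optimal threshold. -/
lemma hunt_key {p q r a b α : ℝ} (hp : 0 < p) (hq : 0 < q)
    (hrpq : r = p * q / (p + q)) (ha : 0 < a) (hb : 0 < b) (hα : 0 < α) :
    (a * (b ^ q * α ^ p / a ^ p) ^ (p + q)⁻¹ / α) ^ p = (a * b / α) ^ r ∧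
    (b / (b ^ q * α ^ p / a ^ p) ^ (p + q)⁻¹) ^ q = (a * b / α) ^ r := by
  have hpq : 0 < p + q := by linarith
  set s : ℝ := b ^ q * α ^ p / a ^ p with hs
  have hs0 : 0 < s := by positivity
  set t : ℝ := s ^ (p + q)⁻¹ with htdef
  have ht : 0 < t := by positivity
  have hlogt : Real.log t = (p + q)⁻¹ * (q * Real.log b + p * Real.log α - p * Real.log a) := by
    rw [htdef, Real.log_rpow hs0, hs, Real.log_div (by positivity) (by positivity),
      Real.log_mul (by positivity) (by positivity), Real.log_rpow hb, Real.log_rpow hα,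
      Real.log_rpow ha]
  have hab : (0:ℝ) < a * b / α := by positivity
  have key1 : Real.log ((a * t / α) ^ p) = Real.log ((a * b / α) ^ r) := by
    rw [Real.log_rpow (by positivity), Real.log_rpow hab,
      Real.log_div (by positivity) hα.ne', Real.log_mul ha.ne' ht.ne',
      Real.log_div (by positivity) hα.ne', Real.log_mul ha.ne' hb.ne', hlogt, hrpq]
    field_simp
    ring
  have key2 : Real.log ((b / t) ^ q) = Real.log ((a * b / α) ^ r) := by
    rw [Real.log_rpow (by positivity), Real.log_rpow hab,
      Real.log_div hb.ne' ht.ne',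
      Real.log_div (by positivity) hα.ne', Real.log_mul ha.ne' hb.ne', hlogt, hrpq]
    field_simp
    ring
  constructor
  · rw [← Real.exp_log (x := (a * t / α) ^ p) (by positivity),
      ← Real.exp_log (x := (a * b / α) ^ r) (by positivity), key1]
  · rw [← Real.exp_log (x := (b / t) ^ q) (by positivity),
      ← Real.exp_log (x := (a * b / α) ^ r) (by positivity), key2]

/-- weak-type Hölder inequality (Hunt's inequality). -/
theorem stmt11 {X : Type*} [MeasurableSpace X] (μ : Measure X)
    (p q r : ℝ) (hp : 0 < p) (hq : 0 < q) (hr : 1 / r = 1 / p + 1 / q)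
    (f g : X → ℝ) (hf : AEMeasurable f μ) (hg : AEMeasurable g μ) :
    wnorm' (fun x => f x * g x) r μ
      ≤ (2 : ℝ≥0∞) ^ (1 / r) * wnorm' f p μ * wnorm' g q μ := by
  have hr0 : 0 < r := by
    have h1 : 0 < 1 / r := by rw [hr]; positivity
    by_contra h
    push_neg at h
    have : 1 / r ≤ 0 := by
      rcases eq_or_lt_of_le h with h' | h'
      · simp [h']
      · exact le_of_lt (div_neg_of_pos_of_neg one_pos h')
    linarith
  have hrpq : r = p * q / (p + q) := by
    have hpq : 0 < p + q := by linarith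
    field_simp at hr ⊢
    nlinarith [hr]
  set A := wnorm' f p μ with hA
  set B := wnorm' g q μ with hB
  -- degenerate cases
  by_cases hA0 : A = 0
  · refine le_trans (iSup₂_le fun α hα => ?_) zero_le
    have hnull : μ {x | α < ‖f x * g x‖} = 0 := by
      refine measure_mono_null (fun x hx => ?_) (wnorm'_zero_imp hp hA0)
      simp only [Set.mem_setOf_eq] at hx ⊢
      by_contra h
      push_neg at h
      have : ‖f x‖ = 0 := le_antisymm h (norm_nonneg _)
      have : f x = 0 := norm_eq_zero.mp this
      rw [this] at hx
      simp at hx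
      linarith
    rw [hnull, ENNReal.zero_rpow_of_pos (by positivity), mul_zero]
  by_cases hB0 : B = 0
  · refine le_trans (iSup₂_le fun α hα => ?_) zero_le
    have hnull : μ {x | α < ‖f x * g x‖} = 0 := by
      refine measure_mono_null (fun x hx => ?_) (wnorm'_zero_imp hq hB0)
      simp only [Set.mem_setOf_eq] at hx ⊢
      by_contra h
      push_neg at h
      have : ‖g x‖ = 0 := le_antisymm h (norm_nonneg _)
      have : g x = 0 := norm_eq_zero.mp this
      rw [this] at hx
      simp at hx
      linarith
    rw [hnull, ENNReal.zero_rpow_of_pos (by positivity), mul_zero]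
  have h2ne : (2 : ℝ≥0∞) ^ (1 / r) ≠ 0 := by
    simp [ENNReal.rpow_eq_zero_iff]
  by_cases hAt : A = ⊤
  · rw [hAt]
    rw [ENNReal.mul_top h2ne, ENNReal.top_mul hB0]
    exact le_top
  by_cases hBt : B = ⊤
  · rw [hBt, ENNReal.mul_top]
    · exact le_top
    · exact mul_ne_zero h2ne hA0
  -- main case
  set a : ℝ := A.toReal with ha
  set b : ℝ := B.toReal with hb
  have ha0 : 0 < a := ENNReal.toReal_pos hA0 hAt
  have hb0 : 0 < b := ENNReal.toReal_pos hB0 hBt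
  have hAa : A = ENNReal.ofReal a := (ENNReal.ofReal_toReal hAt).symm
  have hBb : B = ENNReal.ofReal b := (ENNReal.ofReal_toReal hBt).symm
  refine iSup₂_le fun α hα => ?_
  set t : ℝ := (b ^ q * α ^ p / a ^ p) ^ (p + q)⁻¹ with htdef
  have ht : 0 < t := by positivity
  set c : ℝ := (a * b / α) ^ r with hc
  have hc0 : 0 < c := by positivity
  obtain ⟨key1, key2⟩ := hunt_key hp hq hrpq ha0 hb0 hα
  -- splitting of the superlevel set
  have hsub : {x | α < ‖f x * g x‖} ⊆ {x | α / t < ‖f x‖} ∪ {x | t < ‖g x‖} := by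
    intro x hx
    simp only [Set.mem_setOf_eq, Set.mem_union] at hx ⊢
    by_contra h
    push_neg at h
    obtain ⟨h1, h2⟩ := h
    have : ‖f x * g x‖ ≤ (α / t) * t :=
      (norm_mul _ _).le.trans (mul_le_mul h1 h2 (norm_nonneg _) (by positivity))
    rw [div_mul_cancel₀ _ ht.ne'] at this
    linarith
  have hμ : μ {x | α < ‖f x * g x‖} ≤ 2 * ENNReal.ofReal c := by
    calc μ {x | α < ‖f x * g x‖}
        ≤ μ ({x | α / t < ‖f x‖} ∪ {x | t < ‖g x‖}) := measure_mono hsub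
      _ ≤ μ {x | α / t < ‖f x‖} + μ {x | t < ‖g x‖} := measure_union_le _ _
      _ ≤ (A / ENNReal.ofReal (α / t)) ^ p + (B / ENNReal.ofReal t) ^ q := by
          gcongr
          · exact wnorm'_bound hp (by positivity)
          · exact wnorm'_bound hq ht
      _ = ENNReal.ofReal ((a * t / α) ^ p) + ENNReal.ofReal ((b / t) ^ q) := by
          rw [hAa, hBb, ← ENNReal.ofReal_div_of_pos (by positivity),
            ← ENNReal.ofReal_div_of_pos ht,
            ← ENNReal.ofReal_rpow_of_pos (by positivity),
            ← ENNReal.ofReal_rpow_of_pos (by positivity)]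
          congr 2
          field_simp
      _ = 2 * ENNReal.ofReal c := by rw [key1, key2, ← hc, two_mul]
  calc ENNReal.ofReal α * (μ {x | α < ‖f x * g x‖}) ^ (1 / r)
      ≤ ENNReal.ofReal α * (2 * ENNReal.ofReal c) ^ (1 / r) :=
        mul_le_mul_right (ENNReal.rpow_le_rpow hμ (by positivity)) _
    _ = ENNReal.ofReal α * ((2 : ℝ≥0∞) ^ (1 / r) * ENNReal.ofReal (c ^ (1 / r))) := by
        rw [ENNReal.mul_rpow_of_nonneg _ _ (by positivity),
          ENNReal.ofReal_rpow_of_pos hc0]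
    _ = (2 : ℝ≥0∞) ^ (1 / r) * ENNReal.ofReal (α * (c ^ (1 / r))) := by
        rw [ENNReal.ofReal_mul hα.le]; ring
    _ = (2 : ℝ≥0∞) ^ (1 / r) * A * B := by
        rw [hc, ← Real.rpow_mul (by positivity), mul_one_div, div_self hr0.ne',
          Real.rpow_one]
        rw [hAa, hBb, mul_assoc, ← ENNReal.ofReal_mul ha0.le]
        congr 2
        field_simp

end
end

section
/- There exists an absolute constant C > 0 with the following property. Let a > 0, E ≥ 0, and let u : ℝ × ℝ³ → ℝ³ be continuous with continuous spatial gradient, such that for each τ ∈ (−1, 0) the function u(τ,·) is infinitely differentiable with compact support. Assume that for every τ ∈ (−1,0), ∫_{ℝ³} |u(τ,x)|² dx ≤ E θ_a(τ), and that for every s ∈ (−1,0), ∫_s^0 ∫_{ℝ³} |∇u(τ,x)|² dx dτ ≤ E θ_a(s). Then for every s ∈ (−1,0), ∫_s^0 ∫_{ℝ³} |u(τ,x)|³ dx dτ ≤ C a^{−1/4} E^{3/2} θ_a(s)². -/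
open MeasureTheory Set
open scoped ENNReal RealInnerProductSpace

noncomputable section

open scoped NNReal

lemma opnorm_sq_le (L : E3 →L[ℝ] E3) : ‖L‖ ^ 2 ≤ ∑ i, ‖L (e3 i)‖ ^ 2 := by
  have h : ∀ v : E3, ‖L v‖ ≤ Real.sqrt (∑ i, ‖L (e3 i)‖ ^ 2) * ‖v‖ := by
    intro v
    have hv : L v = ∑ i, v i • L (e3 i) := by
      have hrep : v = ∑ i, v i • e3 i := by
        have := (EuclideanSpace.basisFun (Fin 3) ℝ).sum_repr v
        simpa [e3, EuclideanSpace.basisFun_repr, EuclideanSpace.basisFun_apply]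
          using this.symm
      conv_lhs => rw [hrep]
      simp
    have key : ∑ i, |v i| * ‖L (e3 i)‖ ≤
        Real.sqrt (∑ i, |v i| ^ 2) * Real.sqrt (∑ i, ‖L (e3 i)‖ ^ 2) := by
      have h2 := Finset.sum_mul_sq_le_sq_mul_sq Finset.univ (fun i => |v i|)
        (fun i => ‖L (e3 i)‖)
      have h3 : (0:ℝ) ≤ ∑ i, |v i| * ‖L (e3 i)‖ := by positivity
      calc ∑ i, |v i| * ‖L (e3 i)‖
          = Real.sqrt ((∑ i, |v i| * ‖L (e3 i)‖) ^ 2) := (Real.sqrt_sq h3).symm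
        _ ≤ Real.sqrt ((∑ i, |v i| ^ 2) * ∑ i, ‖L (e3 i)‖ ^ 2) :=
            Real.sqrt_le_sqrt h2
        _ = _ := Real.sqrt_mul (by positivity) _
    rw [hv]
    calc ‖∑ i, v i • L (e3 i)‖ ≤ ∑ i, ‖v i • L (e3 i)‖ := norm_sum_le _ _
      _ = ∑ i, |v i| * ‖L (e3 i)‖ := by simp [norm_smul]
      _ ≤ Real.sqrt (∑ i, |v i| ^ 2) * Real.sqrt (∑ i, ‖L (e3 i)‖ ^ 2) := key
      _ = Real.sqrt (∑ i, ‖L (e3 i)‖ ^ 2) * ‖v‖ := by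
          rw [mul_comm, EuclideanSpace.norm_eq]
          simp [sq_abs, Real.norm_eq_abs]
  have hb := L.opNorm_le_bound (Real.sqrt_nonneg _) h
  calc ‖L‖ ^ 2 ≤ Real.sqrt (∑ i, ‖L (e3 i)‖ ^ 2) ^ 2 :=
        pow_le_pow_left₀ (norm_nonneg _) hb 2
    _ = ∑ i, ‖L (e3 i)‖ ^ 2 := Real.sq_sqrt (by positivity)

abbrev SobK : ℝ≥0 := eLpNormLESNormFDerivOfEqInnerConst (volume : Measure E3) 2

lemma spatial_step (f : E3 → E3) (hf : ContDiff ℝ (⊤ : ℕ∞) f) (hsupp : HasCompactSupport f) :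
    ∫⁻ x, ENNReal.ofReal (‖f x‖ ^ 3) ≤
      (SobK : ℝ≥0∞) ^ (3/2 : ℝ) * (∫⁻ x, ENNReal.ofReal (‖f x‖ ^ 2)) ^ (3/4 : ℝ) *
        (∫⁻ x, ENNReal.ofReal (gradSq f x)) ^ (3/4 : ℝ) := by
  have hfc : Continuous f := hf.continuous
  have hmeas : Measurable fun x => (‖f x‖₊ : ℝ≥0∞) := by fun_prop
  -- rewrite ofReal powers as nnnorm rpow
  have hre : ∀ (k : ℕ) (x : E3), ENNReal.ofReal (‖f x‖ ^ k) = (‖f x‖₊ : ℝ≥0∞) ^ (k : ℝ) := by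
    intro k x
    rw [ENNReal.ofReal_pow (norm_nonneg _), ofReal_norm, enorm_eq_nnnorm, ENNReal.rpow_natCast]
  -- Hölder interpolation
  have hconj : Real.HolderConjugate (4/3) 4 := Real.holderConjugate_iff.mpr ⟨by norm_num, by norm_num⟩
  have hH := ENNReal.lintegral_mul_le_Lp_mul_Lq (volume : Measure E3) hconj
    (f := fun x => (‖f x‖₊ : ℝ≥0∞) ^ (3/2 : ℝ)) (g := fun x => (‖f x‖₊ : ℝ≥0∞) ^ (3/2 : ℝ))
    (by fun_prop) (by fun_prop)
  have h1 : ∫⁻ x, ENNReal.ofReal (‖f x‖ ^ 3) ≤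
      (∫⁻ x, (‖f x‖₊ : ℝ≥0∞) ^ (2 : ℝ)) ^ (3/4 : ℝ) *
        (∫⁻ x, (‖f x‖₊ : ℝ≥0∞) ^ (6 : ℝ)) ^ (1/4 : ℝ) := by
    calc ∫⁻ x, ENNReal.ofReal (‖f x‖ ^ 3)
        = ∫⁻ x, ((fun x => (‖f x‖₊ : ℝ≥0∞) ^ (3/2 : ℝ)) *
            (fun x => (‖f x‖₊ : ℝ≥0∞) ^ (3/2 : ℝ))) x := by
          congr 1; funext x
          rw [hre 3]
          simp only [Pi.mul_apply]
          rw [← ENNReal.rpow_add_of_nonneg _ _ (by norm_num) (by norm_num)]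
          norm_num
      _ ≤ _ := hH
      _ = _ := by
          have e1 : ∫⁻ x, ((‖f x‖₊ : ℝ≥0∞) ^ (3/2:ℝ)) ^ ((4:ℝ)/3) =
              ∫⁻ x, (‖f x‖₊ : ℝ≥0∞) ^ (2:ℝ) := by
            congr 1; funext x; rw [← ENNReal.rpow_mul]; norm_num
          have e2 : ∫⁻ x, ((‖f x‖₊ : ℝ≥0∞) ^ (3/2:ℝ)) ^ ((4:ℝ)) =
              ∫⁻ x, (‖f x‖₊ : ℝ≥0∞) ^ (6:ℝ) := by
            congr 1; funext x; rw [← ENNReal.rpow_mul]; norm_num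
          rw [show ((4:ℝ)/3 : ℝ) = ((4/3 : ℝ)) by norm_num] at e1
          rw [e1, e2]
          norm_num
  have hfin : (0:ℕ) < Module.finrank ℝ E3 := by
    simp [finrank_euclideanSpace_fin]
  have hSob := eLpNorm_le_eLpNorm_fderiv_of_eq_inner (volume : Measure E3)
    (hf.of_le (by simp)) hsupp (p := 2) (p' := 6) (by norm_num) hfin
    (by rw [finrank_euclideanSpace_fin]; norm_num)
  have hgrad : ∫⁻ x, (‖fderiv ℝ f x‖₊ : ℝ≥0∞) ^ (2:ℝ) ≤
      ∫⁻ x, ENNReal.ofReal (gradSq f x) := by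
    apply lintegral_mono
    intro x
    show (‖fderiv ℝ f x‖₊ : ℝ≥0∞) ^ (2:ℝ) ≤ ENNReal.ofReal (gradSq f x)
    have h2 : (‖fderiv ℝ f x‖₊ : ℝ≥0∞) ^ (2:ℝ) = ENNReal.ofReal (‖fderiv ℝ f x‖ ^ 2) := by
      rw [ENNReal.ofReal_pow (norm_nonneg _), ofReal_norm, enorm_eq_nnnorm,
        ← ENNReal.rpow_natCast]
      norm_num
    rw [h2]
    exact ENNReal.ofReal_le_ofReal (opnorm_sq_le _)
  have h6 : (∫⁻ x, (‖f x‖₊ : ℝ≥0∞) ^ (6 : ℝ)) ^ (1/4 : ℝ) ≤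
      (SobK : ℝ≥0∞) ^ (3/2 : ℝ) * (∫⁻ x, ENNReal.ofReal (gradSq f x)) ^ (3/4 : ℝ) := by
    have e6 : eLpNorm f (6:ℝ≥0) volume = (∫⁻ x, (‖f x‖₊ : ℝ≥0∞) ^ (6 : ℝ)) ^ (1/(6:ℝ)) := by
      rw [eLpNorm_nnreal_eq_lintegral (by norm_num)]
      norm_num
      rfl
    have e2 : eLpNorm (fderiv ℝ f) (2:ℝ≥0) volume =
        (∫⁻ x, (‖fderiv ℝ f x‖₊ : ℝ≥0∞) ^ (2 : ℝ)) ^ (1/(2:ℝ)) := by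
      rw [eLpNorm_nnreal_eq_lintegral (by norm_num)]
      norm_num
      rfl
    calc (∫⁻ x, (‖f x‖₊ : ℝ≥0∞) ^ (6 : ℝ)) ^ (1/4 : ℝ)
        = ((∫⁻ x, (‖f x‖₊ : ℝ≥0∞) ^ (6 : ℝ)) ^ (1/(6:ℝ))) ^ (3/2 : ℝ) := by
          rw [← ENNReal.rpow_mul]; norm_num
      _ ≤ ((SobK : ℝ≥0∞) * eLpNorm (fderiv ℝ f) (2:ℝ≥0) volume) ^ (3/2 : ℝ) := by
          apply ENNReal.rpow_le_rpow _ (by norm_num)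
          rw [← e6]
          exact hSob
      _ = (SobK : ℝ≥0∞) ^ (3/2 : ℝ) * (eLpNorm (fderiv ℝ f) (2:ℝ≥0) volume) ^ (3/2 : ℝ) := by
          rw [ENNReal.mul_rpow_of_nonneg _ _ (by norm_num)]
      _ ≤ (SobK : ℝ≥0∞) ^ (3/2 : ℝ) * (∫⁻ x, ENNReal.ofReal (gradSq f x)) ^ (3/4 : ℝ) := by
          gcongr
          rw [e2, ← ENNReal.rpow_mul]
          calc (∫⁻ x, (‖fderiv ℝ f x‖₊ : ℝ≥0∞) ^ (2 : ℝ)) ^ (1/(2:ℝ) * (3/2:ℝ))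
              ≤ (∫⁻ x, ENNReal.ofReal (gradSq f x)) ^ (1/(2:ℝ) * (3/2:ℝ)) := by
                exact ENNReal.rpow_le_rpow hgrad (by norm_num)
            _ = _ := by norm_num
  calc ∫⁻ x, ENNReal.ofReal (‖f x‖ ^ 3)
      ≤ (∫⁻ x, (‖f x‖₊ : ℝ≥0∞) ^ (2 : ℝ)) ^ (3/4 : ℝ) *
        (∫⁻ x, (‖f x‖₊ : ℝ≥0∞) ^ (6 : ℝ)) ^ (1/4 : ℝ) := h1
    _ ≤ (∫⁻ x, (‖f x‖₊ : ℝ≥0∞) ^ (2 : ℝ)) ^ (3/4 : ℝ) *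
        ((SobK : ℝ≥0∞) ^ (3/2 : ℝ) * (∫⁻ x, ENNReal.ofReal (gradSq f x)) ^ (3/4 : ℝ)) := by
        gcongr
    _ = _ := by
        have : ∫⁻ x, (‖f x‖₊ : ℝ≥0∞) ^ (2 : ℝ) = ∫⁻ x, ENNReal.ofReal (‖f x‖ ^ 2) := by
          congr 1; funext x; rw [hre 2]; norm_num
        rw [this]; ring

lemma theta_sq {a s : ℝ} (ha : 0 < a) (hs : s < 0) : theta a s ^ 2 = a * (-s) :=
  Real.sq_sqrt (by nlinarith)

/-- interpolation step: scale-invariant `L³` control in space-time from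
the scale-invariant energy controls. -/
theorem stmt14 :
    ∃ C : ℝ, 0 < C ∧ ∀ (a En : ℝ), 0 < a → 0 ≤ En → ∀ u : ℝ × E3 → E3,
      Continuous u →
      Continuous (fun q : ℝ × E3 => fderiv ℝ (fun y => u (q.1, y)) q.2) →
      (∀ τ ∈ Set.Ioo (-1:ℝ) 0, ContDiff ℝ (⊤ : ℕ∞) (fun x => u (τ, x)) ∧
        HasCompactSupport (fun x => u (τ, x))) →
      (∀ τ ∈ Set.Ioo (-1:ℝ) 0,
        ∫⁻ x : E3, ENNReal.ofReal (‖u (τ, x)‖ ^ 2) ≤ ENNReal.ofReal (En * theta a τ)) →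
      (∀ s ∈ Set.Ioo (-1:ℝ) 0,
        ∫⁻ τ in Set.Ioo s (0:ℝ), ∫⁻ x : E3, ENNReal.ofReal (gradSq (fun y => u (τ, y)) x)
          ≤ ENNReal.ofReal (En * theta a s)) →
      ∀ s ∈ Set.Ioo (-1:ℝ) 0,
        ∫⁻ τ in Set.Ioo s (0:ℝ), ∫⁻ x : E3, ENNReal.ofReal (‖u (τ, x)‖ ^ 3)
          ≤ ENNReal.ofReal (C * a ^ (-(1/4) : ℝ) * En ^ (3/2 : ℝ) * theta a s ^ 2) := by
  refine ⟨((SobK : ℝ)) ^ (3/2 : ℝ) + 1, by positivity, ?_⟩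
  intro a En ha hEn u hu hDu hsm hA hG s hs
  obtain ⟨hs1, hs0⟩ := hs
  set θ : ℝ := theta a s with hθdef
  have hθpos : 0 < θ := Real.sqrt_pos.mpr (by nlinarith)
  have hθsq : θ ^ 2 = a * (-s) := theta_sq ha hs0
  set K' : ℝ≥0∞ := (SobK : ℝ≥0∞) ^ (3/2 : ℝ) with hK'def
  have hK'ne : K' ≠ ⊤ := ENNReal.rpow_ne_top_of_nonneg (by norm_num) ENNReal.coe_ne_top
  set A : ℝ → ℝ≥0∞ := fun τ => ∫⁻ x, ENNReal.ofReal (‖u (τ, x)‖ ^ 2) with hAdef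
  set G : ℝ → ℝ≥0∞ := fun τ => ∫⁻ x, ENNReal.ofReal (gradSq (fun y => u (τ, y)) x)
    with hGdef
  have hmA : Measurable A := by
    rw [hAdef]
    exact Measurable.lintegral_prod_right'
      (f := fun q : ℝ × E3 => ENNReal.ofReal (‖u q‖ ^ 2)) (by fun_prop)
  have hmG : Measurable G := by
    rw [hGdef]
    apply Measurable.lintegral_prod_right'
      (f := fun q : ℝ × E3 =>
        ENNReal.ofReal (∑ i, ‖fderiv ℝ (fun y => u (q.1, y)) q.2 (e3 i)‖ ^ 2))
    apply ENNReal.measurable_ofReal.comp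
    apply Continuous.measurable
    apply continuous_finset_sum
    intro i _
    exact ((hDu.clm_apply continuous_const).norm.pow 2)
  -- pointwise-in-time spatial estimate
  have hstep : ∀ τ ∈ Set.Ioo s (0:ℝ),
      (∫⁻ x, ENNReal.ofReal (‖u (τ, x)‖ ^ 3)) ≤
        K' * (A τ ^ (3/4 : ℝ) * G τ ^ (3/4 : ℝ)) := by
    intro τ hτ
    have hτm : τ ∈ Set.Ioo (-1:ℝ) 0 := ⟨hs1.trans hτ.1, hτ.2⟩
    have := spatial_step (fun x => u (τ, x)) (hsm τ hτm).1 (hsm τ hτm).2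
    calc ∫⁻ x, ENNReal.ofReal (‖u (τ, x)‖ ^ 3)
        ≤ K' * A τ ^ (3/4 : ℝ) * G τ ^ (3/4 : ℝ) := this
      _ = K' * (A τ ^ (3/4 : ℝ) * G τ ^ (3/4 : ℝ)) := by ring
  -- Hölder in time
  have hconj : Real.HolderConjugate 4 (4/3) := Real.holderConjugate_iff.mpr ⟨by norm_num, by norm_num⟩
  have hH2 := ENNReal.lintegral_mul_le_Lp_mul_Lq (volume.restrict (Set.Ioo s 0)) hconj
    (f := fun τ => A τ ^ (3/4 : ℝ)) (g := fun τ => G τ ^ (3/4 : ℝ))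
    (by fun_prop) (by fun_prop)
  have hHbis : ∫⁻ τ in Set.Ioo s (0:ℝ), A τ ^ (3/4 : ℝ) * G τ ^ (3/4 : ℝ) ≤
      (∫⁻ τ in Set.Ioo s (0:ℝ), A τ ^ (3:ℝ)) ^ (1/4 : ℝ) *
        (∫⁻ τ in Set.Ioo s (0:ℝ), G τ) ^ (3/4 : ℝ) := by
    have e1 : ∫⁻ τ in Set.Ioo s (0:ℝ), (A τ ^ (3/4 : ℝ)) ^ (4:ℝ) =
        ∫⁻ τ in Set.Ioo s (0:ℝ), A τ ^ (3:ℝ) := by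
      congr 1; funext τ; rw [← ENNReal.rpow_mul]; norm_num
    have e2 : ∫⁻ τ in Set.Ioo s (0:ℝ), (G τ ^ (3/4 : ℝ)) ^ ((4:ℝ)/3) =
        ∫⁻ τ in Set.Ioo s (0:ℝ), G τ := by
      congr 1; funext τ; rw [← ENNReal.rpow_mul]; norm_num
    calc ∫⁻ τ in Set.Ioo s (0:ℝ), A τ ^ (3/4 : ℝ) * G τ ^ (3/4 : ℝ)
        = ∫⁻ τ in Set.Ioo s (0:ℝ),
            ((fun τ => A τ ^ (3/4:ℝ)) * fun τ => G τ ^ (3/4:ℝ)) τ := rfl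
      _ ≤ _ := hH2
      _ ≤ _ := by
          rw [show ((4:ℝ)/3 : ℝ) = ((4/3 : ℝ)) from by norm_num] at e2
          rw [e1, e2]
          norm_num
  -- bound on ∫ A^3
  have hA3 : ∫⁻ τ in Set.Ioo s (0:ℝ), A τ ^ (3:ℝ) ≤
      ENNReal.ofReal (En ^ 3 * θ ^ 3 * (-s)) := by
    have hpt : ∀ τ ∈ Set.Ioo s (0:ℝ), A τ ^ (3:ℝ) ≤ ENNReal.ofReal (En ^ 3 * θ ^ 3) := by
      intro τ hτ
      have hτm : τ ∈ Set.Ioo (-1:ℝ) 0 := ⟨hs1.trans hτ.1, hτ.2⟩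
      have h1 : A τ ≤ ENNReal.ofReal (En * theta a τ) := hA τ hτm
      have h2 : theta a τ ≤ θ := Real.sqrt_le_sqrt (by nlinarith [hτ.1])
      have hθτ : 0 ≤ theta a τ := Real.sqrt_nonneg _
      calc A τ ^ (3:ℝ) ≤ (ENNReal.ofReal (En * theta a τ)) ^ (3:ℝ) :=
            ENNReal.rpow_le_rpow h1 (by norm_num)
        _ = ENNReal.ofReal ((En * theta a τ) ^ (3:ℝ)) :=
            ENNReal.ofReal_rpow_of_nonneg (by positivity) (by norm_num)
        _ ≤ ENNReal.ofReal (En ^ 3 * θ ^ 3) := by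
            apply ENNReal.ofReal_le_ofReal
            rw [show ((3:ℝ):ℝ) = ((3:ℕ):ℝ) from by norm_num, Real.rpow_natCast, mul_pow]
            exact mul_le_mul_of_nonneg_left (pow_le_pow_left₀ hθτ h2 3) (by positivity)
    calc ∫⁻ τ in Set.Ioo s (0:ℝ), A τ ^ (3:ℝ)
        ≤ ∫⁻ _ in Set.Ioo s (0:ℝ), ENNReal.ofReal (En ^ 3 * θ ^ 3) :=
          setLIntegral_mono measurable_const hpt
      _ = ENNReal.ofReal (En ^ 3 * θ ^ 3) * volume (Set.Ioo s (0:ℝ)) :=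
          setLIntegral_const _ _
      _ = ENNReal.ofReal (En ^ 3 * θ ^ 3) * ENNReal.ofReal (-s) := by
          rw [Real.volume_Ioo, zero_sub]
      _ = ENNReal.ofReal (En ^ 3 * θ ^ 3 * (-s)) := by
          rw [← ENNReal.ofReal_mul (by positivity)]
  have hGs : ∫⁻ τ in Set.Ioo s (0:ℝ), G τ ≤ ENNReal.ofReal (En * θ) := hG s ⟨hs1, hs0⟩
  -- the key real identity
  have hkey : (En ^ 3 * θ ^ 3 * (-s)) ^ (1/4 : ℝ) * (En * θ) ^ (3/4 : ℝ) =
      a ^ (-(1/4) : ℝ) * En ^ (3/2 : ℝ) * θ ^ 2 := by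
    rcases eq_or_lt_of_le hEn with hE0 | hEpos
    · have e0 : ((0:ℝ) ^ 3 * θ ^ 3 * (-s)) = 0 := by ring
      rw [← hE0, e0, Real.zero_rpow (by norm_num : (1/4:ℝ) ≠ 0), zero_mul,
        Real.zero_rpow (by norm_num : (3/2:ℝ) ≠ 0), mul_zero, zero_mul]
    · have hspos : (0:ℝ) < -s := by linarith
      have hX : (0:ℝ) < En ^ 3 * θ ^ 3 * (-s) := mul_pos (by positivity) hspos
      have hY : (0:ℝ) < En * θ := by positivity
      have hL : (0:ℝ) ≤ (En ^ 3 * θ ^ 3 * (-s)) ^ (1/4 : ℝ) * (En * θ) ^ (3/4 : ℝ) :=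
        mul_nonneg (Real.rpow_nonneg hX.le _) (Real.rpow_nonneg hY.le _)
      have hR : (0:ℝ) ≤ a ^ (-(1/4) : ℝ) * En ^ (3/2 : ℝ) * θ ^ 2 := by positivity
      refine (pow_left_inj₀ hL hR (by norm_num : (4:ℕ) ≠ 0)).mp ?_
      have r1 : ((En ^ 3 * θ ^ 3 * (-s)) ^ (1/4 : ℝ)) ^ (4:ℕ) = En ^ 3 * θ ^ 3 * (-s) := by
        rw [← Real.rpow_natCast ((En ^ 3 * θ ^ 3 * (-s)) ^ (1/4 : ℝ)) 4,
          ← Real.rpow_mul hX.le]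
        norm_num
      have r2 : ((En * θ) ^ (3/4 : ℝ)) ^ (4:ℕ) = (En * θ) ^ 3 := by
        rw [← Real.rpow_natCast ((En * θ) ^ (3/4 : ℝ)) 4, ← Real.rpow_mul hY.le,
          ← Real.rpow_natCast (En * θ) 3]
        norm_num
      have r3 : (a ^ (-(1/4) : ℝ)) ^ (4:ℕ) = a⁻¹ := by
        rw [← Real.rpow_natCast (a ^ (-(1/4) : ℝ)) 4, ← Real.rpow_mul ha.le]
        norm_num
        exact Real.rpow_neg_one a
      have r4 : (En ^ (3/2 : ℝ)) ^ (4:ℕ) = En ^ 6 := by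
        rw [← Real.rpow_natCast (En ^ (3/2 : ℝ)) 4, ← Real.rpow_mul hEn,
          ← Real.rpow_natCast En 6]
        norm_num
      rw [mul_pow, mul_pow, mul_pow, r1, r2, r3, r4]
      have hθ6 : θ ^ 6 = (a * (-s)) ^ 3 := by rw [← hθsq]; ring
      rw [show En ^ 3 * θ ^ 3 * -s * (En * θ) ^ 3 = En ^ 6 * θ ^ 6 * (-s) from by ring,
        show (a:ℝ)⁻¹ * En ^ 6 * (θ ^ 2) ^ 4 = a⁻¹ * En ^ 6 * (θ ^ 6 * θ ^ 2) from by ring,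
        hθ6, hθsq]
      field_simp
  -- combine
  calc ∫⁻ τ in Set.Ioo s (0:ℝ), ∫⁻ x : E3, ENNReal.ofReal (‖u (τ, x)‖ ^ 3)
      ≤ ∫⁻ τ in Set.Ioo s (0:ℝ), K' * (A τ ^ (3/4 : ℝ) * G τ ^ (3/4 : ℝ)) :=
        setLIntegral_mono (by fun_prop) hstep
    _ = K' * ∫⁻ τ in Set.Ioo s (0:ℝ), A τ ^ (3/4 : ℝ) * G τ ^ (3/4 : ℝ) :=
        lintegral_const_mul' _ _ hK'ne
    _ ≤ K' * ((∫⁻ τ in Set.Ioo s (0:ℝ), A τ ^ (3:ℝ)) ^ (1/4 : ℝ) *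
          (∫⁻ τ in Set.Ioo s (0:ℝ), G τ) ^ (3/4 : ℝ)) := by gcongr
    _ ≤ K' * (ENNReal.ofReal (En ^ 3 * θ ^ 3 * (-s)) ^ (1/4 : ℝ) *
          ENNReal.ofReal (En * θ) ^ (3/4 : ℝ)) := by gcongr
    _ = ENNReal.ofReal (((SobK : ℝ)) ^ (3/2 : ℝ) *
          ((En ^ 3 * θ ^ 3 * (-s)) ^ (1/4 : ℝ) * (En * θ) ^ (3/4 : ℝ))) := by
        have hXnn : (0:ℝ) ≤ En ^ 3 * θ ^ 3 * (-s) :=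
          mul_nonneg (by positivity) (by linarith)
        have hYnn : (0:ℝ) ≤ En * θ := by positivity
        rw [ENNReal.ofReal_rpow_of_nonneg hXnn (by norm_num : (0:ℝ) ≤ 1/4),
          ENNReal.ofReal_rpow_of_nonneg hYnn (by norm_num : (0:ℝ) ≤ 3/4),
          hK'def, ← ENNReal.ofReal_coe_nnreal,
          ENNReal.ofReal_rpow_of_nonneg SobK.coe_nonneg (by norm_num : (0:ℝ) ≤ 3/2),
          ← ENNReal.ofReal_mul (Real.rpow_nonneg hXnn _),
          ← ENNReal.ofReal_mul (Real.rpow_nonneg SobK.coe_nonneg _)]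
    _ ≤ ENNReal.ofReal ((((SobK : ℝ)) ^ (3/2 : ℝ) + 1) * a ^ (-(1/4) : ℝ) *
          En ^ (3/2 : ℝ) * θ ^ 2) := by
        apply ENNReal.ofReal_le_ofReal
        rw [hkey]
        have hbase : (0:ℝ) ≤ a ^ (-(1/4) : ℝ) * En ^ (3/2 : ℝ) * θ ^ 2 := by positivity
        nlinarith [hbase]


end
end

section
/- Let a ≥ 1, M ≥ 1, C₁ ≥ 0, δ ∈ (0, 1/5), and set q := 5(1+δ)/2 (so q < 3). Let r₀ ∈ (0, √a] and let v : ℝ × ℝ³ → ℝ³ be measurable. Assume: (i) for every s ∈ (−r₀², 0), ∫_s^0 ∫_{B(0, θ_a(τ))} |v(τ,x)|³ dx dτ ≤ C₁ θ_a(s)²; and (ii) for every τ ∈ (−r₀², 0), the weak-L³ quasinorm of v(τ,·) over B(0,√a) \ B(0,θ_a(τ)) is at most M. Then there exists a constant C, depending only on a, M, C₁ and δ, such that for every r ∈ (0, r₀), ∫_{−r²}^0 ∫_{B(0,r)} |v(τ,x)|^q dx dτ ≤ C r^{5−q}. -/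
open MeasureTheory Set
open scoped ENNReal RealInnerProductSpace

noncomputable section

lemma holder_aux {X : Type*} [MeasurableSpace X] (μ : Measure X) (F : X → ℝ≥0∞)
    (hF : AEMeasurable F μ) {q : ℝ} (hq0 : 0 < q) (hq3 : q < 3) :
    ∫⁻ x, F x ^ (q / 3) ∂μ
      ≤ (∫⁻ x, F x ∂μ) ^ (q / 3) * μ Set.univ ^ (1 - q / 3) := by
  have hpq : (3 / q).HolderConjugate (3 / (3 - q)) := by
    constructor
    · rw [inv_div, inv_div, ← add_div]
      norm_num
    · positivity
    · exact div_pos (by norm_num) (by linarith)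
  have e1 : ∀ x : ℝ≥0∞, (x ^ (q / 3)) ^ ((3:ℝ) / q) = x := by
    intro x
    rw [← ENNReal.rpow_mul, show (q / 3) * (3 / q) = 1 by field_simp, ENNReal.rpow_one]
  calc ∫⁻ x, F x ^ (q / 3) ∂μ
      = ∫⁻ x, (((fun x => F x ^ (q / 3)) * (fun _ => (1 : ℝ≥0∞)) : X → ℝ≥0∞)) x ∂μ := by simp
    _ ≤ (∫⁻ x, (F x ^ (q / 3)) ^ ((3:ℝ) / q) ∂μ) ^ (1 / ((3:ℝ) / q)) *
        (∫⁻ _x, (1 : ℝ≥0∞) ^ ((3:ℝ) / (3 - q)) ∂μ) ^ (1 / ((3:ℝ) / (3 - q))) :=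
      ENNReal.lintegral_mul_le_Lp_mul_Lq μ hpq (hF.pow_const _) aemeasurable_const
    _ = (∫⁻ x, F x ∂μ) ^ (q / 3) * μ Set.univ ^ (1 - q / 3) := by
      simp_rw [e1, ENNReal.one_rpow, lintegral_one, one_div_div]
      rw [show (3 - q) / 3 = 1 - q / 3 by ring]


lemma weak3 {X : Type*} [MeasurableSpace X] (μ : Measure X) (g : X → E3)
    (hg : Measurable g) {M q : ℝ} (hM : 0 < M) (hq1 : 1 < q) (hq3 : q < 3)
    (hw : wnorm' g 3 μ ≤ ENNReal.ofReal M)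
    (E : Set X) {V : ℝ} (hV : 0 < V) (hEV : μ E ≤ ENNReal.ofReal V) :
    ∫⁻ x in E, ENNReal.ofReal (‖g x‖ ^ q) ∂μ
      ≤ ENNReal.ofReal (3 / (3 - q) * M ^ q * V ^ (1 - q / 3)) := by
  have hq0 : (0:ℝ) < q := by linarith
  have h3q : (0:ℝ) < 3 - q := by linarith
  set W : ℝ := V ^ ((1:ℝ)/3) with hW
  have hWpos : 0 < W := Real.rpow_pos_of_pos hV _
  set t₀ : ℝ := M / W with ht₀def
  have ht₀ : 0 < t₀ := div_pos hM hWpos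
  -- distribution function bounds
  have hDV : ∀ t : ℝ, (μ.restrict E) {x | t < ‖g x‖} ≤ ENNReal.ofReal V := by
    intro t
    refine le_trans (le_trans (measure_mono (Set.subset_univ _)) ?_) hEV
    rw [Measure.restrict_apply_univ]
  have hdist : ∀ t : ℝ, 0 < t →
      (μ.restrict E) {x | t < ‖g x‖} ≤ ENNReal.ofReal ((M / t) ^ (3:ℝ)) := by
    intro t ht
    have h1 : ENNReal.ofReal t * (μ {x | t < ‖g x‖}) ^ (1/(3:ℝ)) ≤ ENNReal.ofReal M := by
      refine le_trans ?_ hw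
      rw [wnorm']
      exact le_iSup₂ (f := fun (α : ℝ) (_ : 0 < α) =>
        ENNReal.ofReal α * (μ {x | α < ‖g x‖}) ^ (1/(3:ℝ))) t ht
    have h2 : (μ {x | t < ‖g x‖}) ^ (1/(3:ℝ)) ≤ ENNReal.ofReal (M / t) := by
      rw [ENNReal.ofReal_div_of_pos ht]
      rw [ENNReal.le_div_iff_mul_le (Or.inl (ENNReal.ofReal_pos.mpr ht).ne')
        (Or.inl ENNReal.ofReal_ne_top)]
      rw [mul_comm]; exact h1
    calc (μ.restrict E) {x | t < ‖g x‖} ≤ μ {x | t < ‖g x‖} :=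
          Measure.le_iff'.mp Measure.restrict_le_self _
      _ = ((μ {x | t < ‖g x‖}) ^ (1/(3:ℝ))) ^ (3:ℝ) := by
          rw [← ENNReal.rpow_mul]; norm_num
      _ ≤ (ENNReal.ofReal (M / t)) ^ (3:ℝ) := ENNReal.rpow_le_rpow h2 (by norm_num)
      _ = ENNReal.ofReal ((M / t) ^ (3:ℝ)) :=
          ENNReal.ofReal_rpow_of_nonneg (div_nonneg hM.le ht.le) (by norm_num)
  -- layer cake
  have lc : ∫⁻ x in E, ENNReal.ofReal (‖g x‖ ^ q) ∂μ
      = ENNReal.ofReal q * ∫⁻ t in Set.Ioi (0:ℝ),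
          (μ.restrict E) {x | t < ‖g x‖} * ENNReal.ofReal (t ^ (q - 1)) :=
    lintegral_rpow_eq_lintegral_meas_lt_mul (μ.restrict E)
      (ae_of_all _ fun x => norm_nonneg (g x)) hg.norm.aemeasurable hq0
  rw [lc, show Set.Ioi (0:ℝ) = Set.Ioc 0 t₀ ∪ Set.Ioi t₀ from
      (Set.Ioc_union_Ioi_eq_Ioi ht₀.le).symm,
    lintegral_union measurableSet_Ioi (Set.Ioc_disjoint_Ioi le_rfl)]
  -- term 1
  have hT1 : ∫⁻ t in Set.Ioc (0:ℝ) t₀,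
      (μ.restrict E) {x | t < ‖g x‖} * ENNReal.ofReal (t ^ (q - 1))
      ≤ ENNReal.ofReal V * ENNReal.ofReal (t₀ ^ q / q) := by
    have hb : ∫⁻ t in Set.Ioc (0:ℝ) t₀,
        (μ.restrict E) {x | t < ‖g x‖} * ENNReal.ofReal (t ^ (q - 1))
        ≤ ∫⁻ t in Set.Ioc (0:ℝ) t₀, ENNReal.ofReal V * ENNReal.ofReal (t ^ (q - 1)) :=
      lintegral_mono fun t => mul_le_mul_left (hDV t) _
    rw [lintegral_const_mul' _ _ ENNReal.ofReal_ne_top] at hb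
    refine hb.trans ?_
    refine mul_le_mul_right (le_of_eq ?_) _
    have hint : IntegrableOn (fun t : ℝ => t ^ (q - 1)) (Set.Ioc 0 t₀) := by
      have h := intervalIntegral.intervalIntegrable_rpow' (a := 0) (b := t₀)
        (show (-1:ℝ) < q - 1 by linarith)
      rwa [intervalIntegrable_iff_integrableOn_Ioc_of_le ht₀.le] at h
    have hnn : 0 ≤ᵐ[volume.restrict (Set.Ioc (0:ℝ) t₀)] fun t : ℝ => t ^ (q - 1) := by
      filter_upwards [ae_restrict_mem measurableSet_Ioc] with t ht
      exact Real.rpow_nonneg ht.1.le _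
    rw [← ofReal_integral_eq_lintegral_ofReal hint hnn]
    congr 1
    rw [← intervalIntegral.integral_of_le ht₀.le,
      integral_rpow (Or.inl (by linarith : (-1:ℝ) < q - 1)),
      show q - 1 + 1 = q by ring, Real.zero_rpow hq0.ne', sub_zero]
  -- term 2
  have hT2 : ∫⁻ t in Set.Ioi t₀,
      (μ.restrict E) {x | t < ‖g x‖} * ENNReal.ofReal (t ^ (q - 1))
      ≤ ENNReal.ofReal (M ^ (3:ℝ) * (t₀ ^ (q - 3) / (3 - q))) := by
    have hb : ∫⁻ t in Set.Ioi t₀,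
        (μ.restrict E) {x | t < ‖g x‖} * ENNReal.ofReal (t ^ (q - 1))
        ≤ ∫⁻ t in Set.Ioi t₀, ENNReal.ofReal (M ^ (3:ℝ) * t ^ (q - 4)) := by
      refine lintegral_mono_ae ?_
      filter_upwards [ae_restrict_mem measurableSet_Ioi] with t ht
      have htpos : 0 < t := ht₀.trans ht
      have hcomb : (M / t) ^ (3:ℝ) * t ^ (q - 1) = M ^ (3:ℝ) * t ^ (q - 4) := by
        rw [Real.div_rpow hM.le htpos.le,
          show t ^ (q-1) = t ^ (q-4) * t ^ (3:ℝ) by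
            rw [← Real.rpow_add htpos, show q-4+3 = q-1 by ring]]
        have ht3 : t ^ (3:ℝ) ≠ 0 := (Real.rpow_pos_of_pos htpos _).ne'
        field_simp
      calc (μ.restrict E) {x | t < ‖g x‖} * ENNReal.ofReal (t ^ (q - 1))
          ≤ ENNReal.ofReal ((M / t) ^ (3:ℝ)) * ENNReal.ofReal (t ^ (q - 1)) :=
            mul_le_mul_left (hdist t htpos) _
        _ = ENNReal.ofReal ((M / t) ^ (3:ℝ) * t ^ (q - 1)) :=
            (ENNReal.ofReal_mul (Real.rpow_nonneg (div_nonneg hM.le htpos.le) _)).symm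
        _ = ENNReal.ofReal (M ^ (3:ℝ) * t ^ (q - 4)) := by rw [hcomb]
    refine hb.trans (le_of_eq ?_)
    have hint : IntegrableOn (fun t : ℝ => M ^ (3:ℝ) * t ^ (q - 4)) (Set.Ioi t₀) :=
      (integrableOn_Ioi_rpow_of_lt (by linarith) ht₀).const_mul _
    have hnn : 0 ≤ᵐ[volume.restrict (Set.Ioi t₀)] fun t : ℝ => M ^ (3:ℝ) * t ^ (q - 4) := by
      filter_upwards [ae_restrict_mem measurableSet_Ioi] with t ht
      exact mul_nonneg (Real.rpow_nonneg hM.le _) (Real.rpow_nonneg (ht₀.trans ht).le _)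
    rw [← ofReal_integral_eq_lintegral_ofReal hint hnn]
    congr 1
    rw [integral_const_mul, integral_Ioi_rpow_of_lt (by linarith) ht₀,
      show q - 4 + 1 = q - 3 by ring]
    congr 1
    rw [div_eq_div_iff (by linarith : q - 3 ≠ 0) h3q.ne']
    ring
  -- combine
  calc ENNReal.ofReal q * (_ + _)
      ≤ ENNReal.ofReal q * (ENNReal.ofReal V * ENNReal.ofReal (t₀ ^ q / q)
        + ENNReal.ofReal (M ^ (3:ℝ) * (t₀ ^ (q - 3) / (3 - q)))) :=
      mul_le_mul_right (add_le_add hT1 hT2) _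
    _ ≤ ENNReal.ofReal (3 / (3 - q) * M ^ q * V ^ (1 - q / 3)) := by
      rw [← ENNReal.ofReal_mul hV.le,
        ← ENNReal.ofReal_add (mul_nonneg hV.le (div_nonneg (Real.rpow_nonneg ht₀.le _) hq0.le))
          (mul_nonneg (Real.rpow_nonneg hM.le _)
            (div_nonneg (Real.rpow_nonneg ht₀.le _) h3q.le)),
        ← ENNReal.ofReal_mul hq0.le]
      refine ENNReal.ofReal_le_ofReal (le_of_eq ?_)
      -- real identity
      have hA : t₀ ^ q = M ^ q / V ^ (q/3) := by
        rw [ht₀def, Real.div_rpow hM.le hWpos.le, hW, ← Real.rpow_mul hV.le,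
          show (1:ℝ)/3 * q = q/3 by ring]
      have hB : t₀ ^ (q-3) = M ^ (q-3) / V ^ ((q-3)/3) := by
        rw [ht₀def, Real.div_rpow hM.le hWpos.le, hW, ← Real.rpow_mul hV.le,
          show (1:ℝ)/3 * (q-3) = (q-3)/3 by ring]
      have hM3 : M ^ (3:ℝ) * M ^ (q-3) = M ^ q := by
        rw [← Real.rpow_add hM]; norm_num
      have hV1 : V ^ (q/3) * V ^ (1 - q/3) = V := by
        rw [← Real.rpow_add hV, show q/3 + (1 - q/3) = 1 by ring, Real.rpow_one]
      have hV2 : V ^ ((q-3)/3) * V ^ (1 - q/3) = 1 := by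
        rw [← Real.rpow_add hV, show (q-3)/3 + (1 - q/3) = 0 by ring, Real.rpow_zero]
      have hVq : V ^ (q/3) ≠ 0 := (Real.rpow_pos_of_pos hV _).ne'
      have hVq3 : V ^ ((q-3)/3) ≠ 0 := (Real.rpow_pos_of_pos hV _).ne'
      have hdiv : V ^ (1 - q/3) = V / V ^ (q/3) := by
        rw [Real.rpow_sub hV, Real.rpow_one]
      have hV2' : V ^ ((q-3)/3) = (V ^ (1 - q/3))⁻¹ := by
        rw [← Real.rpow_neg hV.le]; congr 1; ring
      have P1 : V * t₀ ^ q = M ^ q * V ^ (1 - q/3) := by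
        rw [hA, hdiv]; field_simp
      have P2 : M ^ (3:ℝ) * t₀ ^ (q-3) = M ^ q * V ^ (1 - q/3) := by
        rw [hB, hV2', div_inv_eq_mul, ← mul_assoc, hM3]
      have expand : q * (V * (t₀ ^ q / q) + M ^ (3:ℝ) * (t₀ ^ (q-3) / (3-q)))
          = V * t₀ ^ q + (q / (3-q)) * (M ^ (3:ℝ) * t₀ ^ (q-3)) := by
        field_simp
      rw [expand, P1, P2]
      field_simp
      ring


lemma final_real {κ c a M q r : ℝ} (hκ : 0 < κ) (hc : 0 ≤ c) (ha : 0 < a) (hM : 0 < M)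
    (hq0 : 0 < q) (h3q : 0 < 3 - q) (hr : 0 < r) :
    (κ * r ^ 3) ^ (1 - q / 3) * ((c * (a * r ^ 2)) ^ (q / 3) * (r ^ 2) ^ (1 - q / 3))
      + 3 / (3 - q) * M ^ q * (κ * r ^ 3) ^ (1 - q / 3) * r ^ 2
      ≤ κ ^ (1 - q / 3) * ((c * a) ^ (q / 3) + 3 / (3 - q) * M ^ q) * r ^ (5 - q) := by
  have e2 : (r : ℝ) ^ (2 : ℕ) = r ^ ((2 : ℝ)) := by
    rw [← Real.rpow_natCast r 2]; norm_num
  have e3 : (r : ℝ) ^ (3 : ℕ) = r ^ ((3 : ℝ)) := by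
    rw [← Real.rpow_natCast r 3]; norm_num
  rw [e2, e3]
  rw [Real.mul_rpow hκ.le (Real.rpow_nonneg hr.le _)]
  rw [show c * (a * r ^ ((2 : ℝ))) = (c * a) * r ^ ((2 : ℝ)) by ring]
  rw [Real.mul_rpow (mul_nonneg hc ha.le) (Real.rpow_nonneg hr.le _)]
  rw [← Real.rpow_mul hr.le, ← Real.rpow_mul hr.le, ← Real.rpow_mul hr.le]
  have m1 : r ^ ((3:ℝ) * (1 - q / 3)) * (r ^ ((2:ℝ) * (q / 3)) * r ^ ((2:ℝ) * (1 - q / 3)))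
      = r ^ ((5:ℝ) - q) := by
    rw [← Real.rpow_add hr, ← Real.rpow_add hr]; congr 1; ring
  have m2 : r ^ ((3:ℝ) * (1 - q / 3)) * r ^ ((2:ℝ)) = r ^ ((5:ℝ) - q) := by
    rw [← Real.rpow_add hr]; congr 1; ring
  refine le_of_eq ?_
  linear_combination (κ ^ (1 - q / 3) * (c * a) ^ (q / 3)) * m1
    + (3 / (3 - q) * M ^ q * κ ^ (1 - q / 3)) * m2


/-- Morrey-type bound from scale-invariant `L³` control inside the
paraboloid and weak-`L³` control outside it. -/
theorem stmt15 (a M C₁ δ : ℝ) (ha : 1 ≤ a) (hM : 1 ≤ M) (hC₁ : 0 ≤ C₁)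
    (hδ : δ ∈ Set.Ioo (0:ℝ) (1/5)) :
    ∃ C : ℝ, ∀ r₀ ∈ Set.Ioc (0:ℝ) (Real.sqrt a), ∀ v : ℝ × E3 → E3, Measurable v →
      (∀ s ∈ Set.Ioo (-(r₀^2)) (0:ℝ),
        ∫⁻ τ in Set.Ioo s (0:ℝ), ∫⁻ x in Metric.ball (0:E3) (theta a τ),
          ENNReal.ofReal (‖v (τ, x)‖ ^ 3) ≤ ENNReal.ofReal (C₁ * theta a s ^ 2)) →
      (∀ τ ∈ Set.Ioo (-(r₀^2)) (0:ℝ),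
        wnorm' ((Metric.ball (0:E3) (Real.sqrt a) \
          Metric.ball (0:E3) (theta a τ)).indicator (fun x => v (τ, x))) 3 volume
          ≤ ENNReal.ofReal M) →
      ∀ r ∈ Set.Ioo (0:ℝ) r₀,
        ∫⁻ τ in Set.Ioo (-(r^2)) (0:ℝ), ∫⁻ x in Metric.ball (0:E3) r,
          ENNReal.ofReal (‖v (τ, x)‖ ^ (5 * (1 + δ) / 2))
            ≤ ENNReal.ofReal (C * r ^ (5 - 5 * (1 + δ) / 2)) := by
  obtain ⟨hδ0, hδ5⟩ := hδ
  set q : ℝ := 5 * (1 + δ) / 2 with hqdef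
  have hq1 : 1 < q := by rw [hqdef]; linarith
  have hq0 : (0:ℝ) < q := by linarith
  have hq3 : q < 3 := by rw [hqdef]; linarith
  have h3q : (0:ℝ) < 3 - q := by linarith
  have ha0 : (0:ℝ) < a := by linarith
  have hM0 : (0:ℝ) < M := by linarith
  set κ : ℝ := (volume (Metric.ball (0:E3) 1)).toReal with hκdef
  have hκ0 : 0 < κ := ENNReal.toReal_pos
    (Metric.measure_ball_pos volume (0:E3) one_pos).ne' measure_ball_lt_top.ne
  have hballvol : ∀ ρ : ℝ, 0 ≤ ρ →
      volume (Metric.ball (0:E3) ρ) = ENNReal.ofReal (κ * ρ ^ 3) := by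
    intro ρ hρ
    rw [Measure.addHaar_ball _ _ hρ, finrank_euclideanSpace_fin,
      show volume (Metric.ball (0:E3) 1) = ENNReal.ofReal κ from
        (ENNReal.ofReal_toReal measure_ball_lt_top.ne).symm,
      ← ENNReal.ofReal_mul (by positivity)]
    congr 1; ring
  refine ⟨κ ^ (1 - q / 3) * ((C₁ * a) ^ (q / 3) + 3 / (3 - q) * M ^ q), ?_⟩
  rintro r₀ ⟨hr₀0, hr₀a⟩ v hv h1 h2 r ⟨hr0, hrr₀⟩
  have hra : r ≤ Real.sqrt a := le_trans hrr₀.le hr₀a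
  have hrsq : -(r₀ ^ 2) < -(r ^ 2) := by nlinarith
  have hvτ : ∀ τ : ℝ, Measurable fun x : E3 => v (τ, x) :=
    fun τ => hv.comp measurable_prodMk_left
  have hV : (0:ℝ) < κ * r ^ 3 := by positivity
  -- measurability of the inner-paraboloid slice integral
  have hAmeas : Measurable (fun τ : ℝ => ∫⁻ x in Metric.ball (0:E3) (theta a τ),
      ENNReal.ofReal (‖v (τ, x)‖ ^ 3)) := by
    have hGm : Measurable fun p : ℝ × E3 =>
        Set.indicator {p : ℝ × E3 | ‖p.2‖ < theta a p.1}
          (fun p => ENNReal.ofReal (‖v p‖ ^ 3)) p := by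
      refine Measurable.indicator ((hv.norm.pow_const 3).ennreal_ofReal) ?_
      refine IsOpen.measurableSet (isOpen_lt (continuous_norm.comp continuous_snd) ?_)
      show Continuous fun p : ℝ × E3 => theta a p.1
      simp only [theta]
      exact Real.continuous_sqrt.comp ((continuous_const.mul continuous_neg).comp continuous_fst)
    have heq : (fun τ : ℝ => ∫⁻ x in Metric.ball (0:E3) (theta a τ),
        ENNReal.ofReal (‖v (τ, x)‖ ^ 3))
        = fun τ : ℝ => ∫⁻ x, Set.indicator {p : ℝ × E3 | ‖p.2‖ < theta a p.1}
            (fun p => ENNReal.ofReal (‖v p‖ ^ 3)) (τ, x) := by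
      funext τ
      rw [← lintegral_indicator measurableSet_ball]
      congr 1
      funext x
      by_cases hx : x ∈ Metric.ball (0:E3) (theta a τ)
      · rw [Set.indicator_of_mem hx,
          Set.indicator_of_mem (by simpa [Set.mem_setOf_eq, mem_ball_zero_iff] using hx)]
      · rw [Set.indicator_of_notMem hx,
          Set.indicator_of_notMem (by simpa [Set.mem_setOf_eq, mem_ball_zero_iff] using hx)]
    rw [heq]
    exact hGm.lintegral_prod_right'
  set c1 : ℝ≥0∞ := ENNReal.ofReal ((κ * r ^ 3) ^ (1 - q / 3)) with hc1
  set c2 : ℝ≥0∞ := ENNReal.ofReal (3 / (3 - q) * M ^ q * (κ * r ^ 3) ^ (1 - q / 3)) with hc2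
  -- pointwise (in τ) estimate
  have step1 : ∫⁻ τ in Set.Ioo (-(r^2)) (0:ℝ), ∫⁻ x in Metric.ball (0:E3) r,
      ENNReal.ofReal (‖v (τ, x)‖ ^ q)
      ≤ ∫⁻ τ in Set.Ioo (-(r^2)) (0:ℝ),
        (c1 * (∫⁻ x in Metric.ball (0:E3) (theta a τ),
          ENNReal.ofReal (‖v (τ, x)‖ ^ 3)) ^ (q / 3) + c2) := by
    refine lintegral_mono_ae ?_
    filter_upwards [ae_restrict_mem measurableSet_Ioo] with τ hτ
    obtain ⟨hτ1, hτ2⟩ := hτ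
    have hτball : τ ∈ Set.Ioo (-(r₀^2)) (0:ℝ) := ⟨lt_trans hrsq hτ1, hτ2⟩
    have hinner : ∫⁻ x in Metric.ball (0:E3) r ∩ Metric.ball (0:E3) (theta a τ),
        ENNReal.ofReal (‖v (τ, x)‖ ^ q)
        ≤ c1 * (∫⁻ x in Metric.ball (0:E3) (theta a τ),
            ENNReal.ofReal (‖v (τ, x)‖ ^ 3)) ^ (q / 3) := by
      have hrw : ∀ x : E3, ENNReal.ofReal (‖v (τ, x)‖ ^ q)
          = ENNReal.ofReal (‖v (τ, x)‖ ^ 3) ^ (q / 3) := by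
        intro x
        rw [ENNReal.ofReal_rpow_of_nonneg (by positivity) (by linarith)]
        congr 1
        rw [← Real.rpow_natCast ‖v (τ, x)‖ 3, ← Real.rpow_mul (norm_nonneg _),
          show ((3:ℕ):ℝ) * (q / 3) = q by push_cast; ring]
      simp_rw [hrw]
      have hF : AEMeasurable (fun x : E3 => ENNReal.ofReal (‖v (τ, x)‖ ^ 3))
          (volume.restrict (Metric.ball (0:E3) r ∩ Metric.ball (0:E3) (theta a τ))) :=
        (((hvτ τ).norm.pow_const 3).ennreal_ofReal).aemeasurable
      have hh := holder_aux (volume.restrict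
        (Metric.ball (0:E3) r ∩ Metric.ball (0:E3) (theta a τ))) _ hF hq0 hq3
      rw [Measure.restrict_apply_univ] at hh
      refine hh.trans ?_
      have hm1 : (∫⁻ x in Metric.ball (0:E3) r ∩ Metric.ball (0:E3) (theta a τ),
          ENNReal.ofReal (‖v (τ, x)‖ ^ 3)) ^ (q / 3)
          ≤ (∫⁻ x in Metric.ball (0:E3) (theta a τ),
            ENNReal.ofReal (‖v (τ, x)‖ ^ 3)) ^ (q / 3) :=
        ENNReal.rpow_le_rpow (lintegral_mono_set Set.inter_subset_right) (by linarith)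
      have hm2 : (volume (Metric.ball (0:E3) r ∩ Metric.ball (0:E3) (theta a τ))) ^ (1 - q / 3)
          ≤ c1 := by
        rw [hc1, ← ENNReal.ofReal_rpow_of_nonneg hV.le (by linarith)]
        refine ENNReal.rpow_le_rpow ?_ (by linarith)
        rw [← hballvol r hr0.le]
        exact measure_mono Set.inter_subset_left
      calc _ ≤ (∫⁻ x in Metric.ball (0:E3) (theta a τ),
            ENNReal.ofReal (‖v (τ, x)‖ ^ 3)) ^ (q / 3) * c1 := mul_le_mul' hm1 hm2
        _ = _ := mul_comm _ _
    have houter : ∫⁻ x in Metric.ball (0:E3) r \ Metric.ball (0:E3) (theta a τ),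
        ENNReal.ofReal (‖v (τ, x)‖ ^ q) ≤ c2 := by
      have hw := h2 τ hτball
      set g : E3 → E3 := (Metric.ball (0:E3) (Real.sqrt a) \
        Metric.ball (0:E3) (theta a τ)).indicator (fun x => v (τ, x)) with hgdef
      have hgm : Measurable g := (hvτ τ).indicator (measurableSet_ball.diff measurableSet_ball)
      have hsub : Metric.ball (0:E3) r \ Metric.ball (0:E3) (theta a τ)
          ⊆ Metric.ball (0:E3) (Real.sqrt a) \ Metric.ball (0:E3) (theta a τ) :=
        Set.diff_subset_diff_left (Metric.ball_subset_ball hra)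
      have hcongr : ∫⁻ x in Metric.ball (0:E3) r \ Metric.ball (0:E3) (theta a τ),
          ENNReal.ofReal (‖v (τ, x)‖ ^ q)
          = ∫⁻ x in Metric.ball (0:E3) r \ Metric.ball (0:E3) (theta a τ),
            ENNReal.ofReal (‖g x‖ ^ q) := by
        refine setLIntegral_congr_fun (measurableSet_ball.diff measurableSet_ball)
          (fun x hx => ?_)
        rw [hgdef, Set.indicator_of_mem (hsub hx)]
      rw [hcongr]
      calc ∫⁻ x in Metric.ball (0:E3) r \ Metric.ball (0:E3) (theta a τ),
            ENNReal.ofReal (‖g x‖ ^ q)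
          ≤ ∫⁻ x in Metric.ball (0:E3) r, ENNReal.ofReal (‖g x‖ ^ q) :=
            lintegral_mono_set Set.diff_subset
        _ ≤ ENNReal.ofReal (3 / (3 - q) * M ^ q * (κ * r ^ 3) ^ (1 - q / 3)) :=
            weak3 volume g hgm hM0 hq1 hq3 hw _ hV (le_of_eq (hballvol r hr0.le))
        _ = c2 := hc2.symm
    calc ∫⁻ x in Metric.ball (0:E3) r, ENNReal.ofReal (‖v (τ, x)‖ ^ q)
        = ∫⁻ x in (Metric.ball (0:E3) r ∩ Metric.ball (0:E3) (theta a τ))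
            ∪ (Metric.ball (0:E3) r \ Metric.ball (0:E3) (theta a τ)),
            ENNReal.ofReal (‖v (τ, x)‖ ^ q) := by rw [Set.inter_union_diff]
      _ ≤ _ + _ := lintegral_union_le _ _ _
      _ ≤ c1 * (∫⁻ x in Metric.ball (0:E3) (theta a τ),
            ENNReal.ofReal (‖v (τ, x)‖ ^ 3)) ^ (q / 3) + c2 := add_le_add hinner houter
  -- integrate the pointwise bound
  have step2 : ∫⁻ τ in Set.Ioo (-(r^2)) (0:ℝ),
      (c1 * (∫⁻ x in Metric.ball (0:E3) (theta a τ),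
        ENNReal.ofReal (‖v (τ, x)‖ ^ 3)) ^ (q / 3) + c2)
      = c1 * (∫⁻ τ in Set.Ioo (-(r^2)) (0:ℝ),
          (∫⁻ x in Metric.ball (0:E3) (theta a τ),
            ENNReal.ofReal (‖v (τ, x)‖ ^ 3)) ^ (q / 3)) + c2 * ENNReal.ofReal (r ^ 2) := by
    rw [lintegral_add_right _ measurable_const,
      lintegral_const_mul' _ _ ENNReal.ofReal_ne_top,
      setLIntegral_const, Real.volume_Ioo, show (0:ℝ) - -(r^2) = r ^ 2 by ring]
  -- Hölder in time
  have step3 : ∫⁻ τ in Set.Ioo (-(r^2)) (0:ℝ),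
      (∫⁻ x in Metric.ball (0:E3) (theta a τ),
        ENNReal.ofReal (‖v (τ, x)‖ ^ 3)) ^ (q / 3)
      ≤ ENNReal.ofReal ((C₁ * (a * r ^ 2)) ^ (q / 3) * (r ^ 2) ^ (1 - q / 3)) := by
    have hh := holder_aux (volume.restrict (Set.Ioo (-(r^2)) (0:ℝ)))
      (fun τ => ∫⁻ x in Metric.ball (0:E3) (theta a τ),
        ENNReal.ofReal (‖v (τ, x)‖ ^ 3)) hAmeas.aemeasurable hq0 hq3
    rw [Measure.restrict_apply_univ, Real.volume_Ioo,
      show (0:ℝ) - -(r^2) = r ^ 2 by ring] at hh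
    refine hh.trans ?_
    rw [ENNReal.ofReal_mul (by positivity)]
    refine mul_le_mul' ?_ (le_of_eq ?_)
    · rw [← ENNReal.ofReal_rpow_of_nonneg (by positivity) (by linarith)]
      refine ENNReal.rpow_le_rpow ?_ (by linarith)
      have hs := h1 (-(r^2)) ⟨hrsq, neg_lt_zero.mpr (by positivity)⟩
      have hth : theta a (-(r^2)) ^ 2 = a * r ^ 2 := by
        rw [theta, neg_neg]
        exact Real.sq_sqrt (by positivity)
      rwa [hth] at hs
    · exact ENNReal.ofReal_rpow_of_nonneg (by positivity) (by linarith)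
  -- combine everything
  calc ∫⁻ τ in Set.Ioo (-(r^2)) (0:ℝ), ∫⁻ x in Metric.ball (0:E3) r,
        ENNReal.ofReal (‖v (τ, x)‖ ^ q)
      ≤ _ := step1
    _ = c1 * (∫⁻ τ in Set.Ioo (-(r^2)) (0:ℝ),
          (∫⁻ x in Metric.ball (0:E3) (theta a τ),
            ENNReal.ofReal (‖v (τ, x)‖ ^ 3)) ^ (q / 3)) + c2 * ENNReal.ofReal (r ^ 2) := step2
    _ ≤ c1 * ENNReal.ofReal ((C₁ * (a * r ^ 2)) ^ (q / 3) * (r ^ 2) ^ (1 - q / 3))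
        + c2 * ENNReal.ofReal (r ^ 2) := by gcongr
    _ = ENNReal.ofReal ((κ * r ^ 3) ^ (1 - q / 3)
          * ((C₁ * (a * r ^ 2)) ^ (q / 3) * (r ^ 2) ^ (1 - q / 3))
        + 3 / (3 - q) * M ^ q * (κ * r ^ 3) ^ (1 - q / 3) * r ^ 2) := by
      have n1 : (0:ℝ) ≤ (κ * r ^ 3) ^ (1 - q / 3) := Real.rpow_nonneg hV.le _
      have n2 : (0:ℝ) ≤ 3 / (3 - q) * M ^ q * (κ * r ^ 3) ^ (1 - q / 3) :=
        mul_nonneg (mul_nonneg (div_nonneg (by norm_num) h3q.le)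
          (Real.rpow_nonneg hM0.le _)) n1
      rw [hc1, hc2, ← ENNReal.ofReal_mul n1, ← ENNReal.ofReal_mul n2,
        ← ENNReal.ofReal_add (mul_nonneg n1 (by positivity)) (mul_nonneg n2 (by positivity))]
    _ ≤ ENNReal.ofReal ((κ ^ (1 - q / 3) * ((C₁ * a) ^ (q / 3) + 3 / (3 - q) * M ^ q))
          * r ^ (5 - q)) :=
      ENNReal.ofReal_le_ofReal (final_real hκ0 hC₁ ha0 hM0 hq0 h3q hr0)


end
end
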